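/- (Variance of the deformed $q$-binomial variable) Let $0<q<1$, $\theta>0$, $n\ge 2$, and let $X$ follow the $q$-binomial distribution of the first kind with probability function $f_X^B(x)=\binom{n}{x}_q q^{\binom{x}{2}}\theta^x \prod_{j=1}^{n}(1+\theta q^{j-1})^{-1}$, $x=0,1,\ldots,n$. Then the variance of the deformed random variable $[X]_{1/q}$ is $V\big([X]_{1/q}\big)=\sum_{x=0}^{n}\big([x]_{1/q}-\mu\big)^2 f_X^B(x) = \frac{1-q}{q}\,[n]_q^2\,\frac{\theta^2}{(1+\theta q^{n-1})^2(1+\theta q^{n-2})} + [n]_q\,\frac{\theta}{(1+\theta q^{n-1})(1+\theta q^{n-2})}$, where $\mu=[n]_q\,\theta/(1+\theta q^{n-1})$. -/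

import Mathlib

open scoped BigOperators

/-- The `q`-factorial `[n]_q! = ∏_{k=1}^n (1-q^k)/(1-q)`. -/
noncomputable def qFact (q : ℝ) (n : ℕ) : ℝ :=
  ∏ k ∈ Finset.range n, (1 - q ^ (k + 1)) / (1 - q)

/-- The `q`-binomial coefficient. -/
noncomputable def qBinom (q : ℝ) (n x : ℕ) : ℝ :=
  qFact q n / (qFact q x * qFact q (n - x))

/-- The `q`-number `[n]_q = (1-q^n)/(1-q)`. -/
noncomputable def qNat (q : ℝ) (n : ℕ) : ℝ := (1 - q ^ n) / (1 - q)

/-- The deformed value `[x]_{1/q} = (q^{-x}-1)/(q^{-1}-1)`. -/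
noncomputable def qDef (q : ℝ) (x : ℕ) : ℝ := (q⁻¹ ^ x - 1) / (q⁻¹ - 1)

/-!
The weights `w_n(x) = [n choose x]_q q^(x choose 2) θ^x` sum to `∏_{j<n} (1 + θ q^j)` (Cauchy's
`q`-binomial theorem). Since `[x]_{1/q} q^(x-1) = [x]_q`, the absorption identity
`[x]_q [n choose x]_q = [n]_q [n-1 choose x-1]_q` turns `∑ [x]_{1/q} g(x) w_n(x)` into
`[n]_q θ ∑ g(x+1) w_{n-1}(x)`; together with `[x+1]_{1/q} = q⁻¹ [x]_{1/q} + 1` this gives the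
first two moments in closed form, and the variance is then a rational identity in `q`, `θ` and
`q^(n-2)`.
-/

open Finset

section QBinomial

variable {q : ℝ}

lemma one_sub_pow_succ_pos (hq0 : 0 ≤ q) (hq1 : q < 1) (k : ℕ) : 0 < 1 - q ^ (k + 1) :=
  sub_pos.2 (pow_lt_one₀ hq0 hq1 k.succ_ne_zero)

lemma qFact_zero : qFact q 0 = 1 := prod_range_zero _

lemma qFact_succ (n : ℕ) : qFact q (n + 1) = qFact q n * ((1 - q ^ (n + 1)) / (1 - q)) :=
  prod_range_succ _ n

lemma qFact_pos (hq0 : 0 ≤ q) (hq1 : q < 1) (n : ℕ) : 0 < qFact q n :=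
  prod_pos fun k _ => div_pos (one_sub_pow_succ_pos hq0 hq1 k) (by linarith)

lemma qBinom_zero_right (hq0 : 0 ≤ q) (hq1 : q < 1) (n : ℕ) : qBinom q n 0 = 1 := by
  rw [qBinom, qFact_zero, one_mul, Nat.sub_zero, div_self (qFact_pos hq0 hq1 n).ne']

lemma qBinom_self (hq0 : 0 ≤ q) (hq1 : q < 1) (n : ℕ) : qBinom q n n = 1 := by
  rw [qBinom, Nat.sub_self, qFact_zero, mul_one, div_self (qFact_pos hq0 hq1 n).ne']

lemma qBinom_succ_succ (hq0 : 0 ≤ q) (hq1 : q < 1) {n x : ℕ} (hx : x < n) :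
    qBinom q (n + 1) (x + 1) = qBinom q n (x + 1) + q ^ (n - x) * qBinom q n x := by
  obtain ⟨m, rfl⟩ : ∃ m, n = x + 1 + m := ⟨n - (x + 1), by omega⟩
  have hm₁ : x + 1 + m + 1 - (x + 1) = m + 1 := by omega
  have hm₂ : x + 1 + m - (x + 1) = m := by omega
  have hm₃ : x + 1 + m - x = m + 1 := by omega
  have := (one_sub_pow_succ_pos hq0 hq1 x).ne'; have := (one_sub_pow_succ_pos hq0 hq1 m).ne'
  have := (qFact_pos hq0 hq1 x).ne'; have := (qFact_pos hq0 hq1 m).ne'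
  have : 1 - q ≠ 0 := by linarith
  rw [qBinom, qBinom, qBinom, hm₁, hm₂, hm₃, qFact_succ (x + 1 + m), qFact_succ x, qFact_succ m]
  field_simp
  ring

lemma qNat_succ_mul_qBinom (hq0 : 0 ≤ q) (hq1 : q < 1) (n x : ℕ) :
    qNat q (x + 1) * qBinom q (n + 1) (x + 1) = qNat q (n + 1) * qBinom q n x := by
  have := (qFact_pos hq0 hq1 x).ne'; have := (qFact_pos hq0 hq1 (n - x)).ne'
  have := (one_sub_pow_succ_pos hq0 hq1 x).ne'
  have : 1 - q ≠ 0 := by linarith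
  rw [qBinom, qBinom, Nat.add_sub_add_right, qFact_succ n, qFact_succ x, qNat, qNat]
  field_simp

end QBinomial

lemma Nat.succ_mul_self_div_two (x : ℕ) : (x + 1) * (x + 1 - 1) / 2 = x * (x - 1) / 2 + x := by
  rw [← Nat.choose_two_right, ← Nat.choose_two_right, Nat.choose_succ_succ, Nat.choose_one_right,
    add_comm]

noncomputable def qBinomWeight (q θ : ℝ) (n x : ℕ) : ℝ :=
  qBinom q n x * q ^ (x * (x - 1) / 2) * θ ^ x

section Weight

variable {q : ℝ} (θ : ℝ)

lemma qBinomWeight_zero_right (hq0 : 0 ≤ q) (hq1 : q < 1) (n : ℕ) :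
    qBinomWeight q θ n 0 = 1 := by
  simp [qBinomWeight, qBinom_zero_right hq0 hq1]

lemma qBinomWeight_succ_self (hq0 : 0 ≤ q) (hq1 : q < 1) (n : ℕ) :
    qBinomWeight q θ (n + 1) (n + 1) = q ^ n * θ * qBinomWeight q θ n n := by
  rw [qBinomWeight, qBinomWeight, qBinom_self hq0 hq1, qBinom_self hq0 hq1,
    Nat.succ_mul_self_div_two, pow_add, pow_succ]
  ring

lemma qBinomWeight_succ_succ (hq0 : 0 ≤ q) (hq1 : q < 1) {n x : ℕ} (hx : x < n) :
    qBinomWeight q θ (n + 1) (x + 1) =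
      qBinomWeight q θ n (x + 1) + q ^ n * θ * qBinomWeight q θ n x := by
  have hpow : q ^ (n - x) * q ^ x = q ^ n := by rw [← pow_add, Nat.sub_add_cancel hx.le]
  rw [qBinomWeight, qBinomWeight, qBinomWeight, qBinom_succ_succ hq0 hq1 hx,
    Nat.succ_mul_self_div_two, pow_add, pow_succ, ← hpow]
  ring

theorem sum_qBinomWeight (hq0 : 0 ≤ q) (hq1 : q < 1) (n : ℕ) :
    ∑ x ∈ range (n + 1), qBinomWeight q θ n x = ∏ j ∈ range n, (1 + θ * q ^ j) := by
  induction n with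
  | zero => simp [qBinomWeight_zero_right θ hq0 hq1]
  | succ n ih =>
    calc ∑ x ∈ range (n + 2), qBinomWeight q θ (n + 1) x
      _ = ∑ x ∈ range n, qBinomWeight q θ (n + 1) (x + 1) + qBinomWeight q θ (n + 1) (n + 1)
            + qBinomWeight q θ (n + 1) 0 := by
        rw [sum_range_succ', sum_range_succ]
      _ = (∑ x ∈ range n, qBinomWeight q θ n (x + 1) + qBinomWeight q θ n 0)
            + q ^ n * θ * (∑ x ∈ range n, qBinomWeight q θ n x + qBinomWeight q θ n n) := by
        rw [sum_congr rfl fun x hx => qBinomWeight_succ_succ θ hq0 hq1 (mem_range.1 hx),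
          sum_add_distrib, ← mul_sum, qBinomWeight_succ_self θ hq0 hq1,
          qBinomWeight_zero_right θ hq0 hq1, qBinomWeight_zero_right θ hq0 hq1]
        ring
      _ = ∏ j ∈ range (n + 1), (1 + θ * q ^ j) := by
        rw [← sum_range_succ', ← sum_range_succ, ih, prod_range_succ]
        ring

end Weight

section Deformed

variable {q : ℝ}

lemma qDef_zero : qDef q 0 = 0 := by simp [qDef]

lemma qDef_succ (hq : q ≠ 1) (x : ℕ) : qDef q (x + 1) = q⁻¹ * qDef q x + 1 := by
  have : q⁻¹ - 1 ≠ 0 := sub_ne_zero.2 (inv_ne_one.2 hq)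
  rw [qDef, qDef]
  generalize q⁻¹ = r at this ⊢
  field_simp
  ring

lemma qDef_succ_mul_pow (hq0 : q ≠ 0) (hq1 : q ≠ 1) (x : ℕ) :
    qDef q (x + 1) * q ^ x = qNat q (x + 1) := by
  have : 1 - q ≠ 0 := sub_ne_zero.2 hq1.symm
  rw [qDef, qNat, inv_pow]
  field_simp
  ring

variable (θ : ℝ) (hq0 : 0 < q) (hq1 : q < 1)
include hq0 hq1

lemma qDef_succ_mul_qBinomWeight (n x : ℕ) :
    qDef q (x + 1) * qBinomWeight q θ (n + 1) (x + 1) =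
      qNat q (n + 1) * θ * qBinomWeight q θ n x := by
  rw [qBinomWeight, qBinomWeight, Nat.succ_mul_self_div_two, pow_add, pow_succ θ]
  linear_combination (qBinom q (n + 1) (x + 1) * q ^ (x * (x - 1) / 2) * θ ^ x * θ) *
      qDef_succ_mul_pow hq0.ne' hq1.ne x +
    (q ^ (x * (x - 1) / 2) * θ ^ x * θ) * qNat_succ_mul_qBinom hq0.le hq1 n x

lemma sum_qDef_mul_mul_qBinomWeight (g : ℕ → ℝ) (n : ℕ) :
    ∑ x ∈ range (n + 2), qDef q x * g x * qBinomWeight q θ (n + 1) x =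
      qNat q (n + 1) * θ * ∑ x ∈ range (n + 1), g (x + 1) * qBinomWeight q θ n x := by
  rw [sum_range_succ', qDef_zero, zero_mul, zero_mul, add_zero, mul_sum]
  exact sum_congr rfl fun x _ => by
    linear_combination g (x + 1) * qDef_succ_mul_qBinomWeight θ hq0 hq1 n x

lemma sum_qDef_mul_qBinomWeight (n : ℕ) :
    (∑ x ∈ range (n + 1), qDef q x * qBinomWeight q θ n x) * (1 + θ * q ^ ((n : ℤ) - 1)) =
      qNat q n * θ * ∏ j ∈ range n, (1 + θ * q ^ j) := by
  cases n with
  | zero => simp [qDef, qNat]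
  | succ n =>
    have hshift := sum_qDef_mul_mul_qBinomWeight θ hq0 hq1 (fun _ => 1) n
    simp only [mul_one, one_mul] at hshift
    rw [hshift, sum_qBinomWeight θ hq0.le hq1, prod_range_succ, Nat.cast_succ,
      add_sub_cancel_right, zpow_natCast]
    ring

lemma sum_qDef_sq_mul_qBinomWeight (n : ℕ) :
    (∑ x ∈ range (n + 2), qDef q x ^ 2 * qBinomWeight q θ (n + 1) x) *
        (1 + θ * q ^ ((n : ℤ) - 1)) =
      qNat q (n + 1) * θ * (q⁻¹ * qNat q n * θ + (1 + θ * q ^ ((n : ℤ) - 1))) *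
        ∏ j ∈ range n, (1 + θ * q ^ j) := by
  have hrec : ∑ x ∈ range (n + 1), qDef q (x + 1) * qBinomWeight q θ n x =
      q⁻¹ * ∑ x ∈ range (n + 1), qDef q x * qBinomWeight q θ n x +
        ∑ x ∈ range (n + 1), qBinomWeight q θ n x := by
    rw [mul_sum, ← sum_add_distrib]
    exact sum_congr rfl fun x _ => by rw [qDef_succ hq1.ne]; ring
  simp only [sq, sum_qDef_mul_mul_qBinomWeight θ hq0 hq1 (qDef q), hrec,
    sum_qBinomWeight θ hq0.le hq1]
  linear_combination (qNat q (n + 1) * θ * q⁻¹) * sum_qDef_mul_qBinomWeight θ hq0 hq1 n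

end Deformed

lemma sum_sub_sq_mul_div {ι : Type*} (s : Finset ι) (f w : ι → ℝ) (μ P : ℝ) :
    ∑ x ∈ s, (f x - μ) ^ 2 * (w x / P) =
      (∑ x ∈ s, f x ^ 2 * w x - 2 * μ * ∑ x ∈ s, f x * w x + μ ^ 2 * ∑ x ∈ s, w x) / P := by
  rw [mul_sum, mul_sum, ← sum_sub_distrib, ← sum_add_distrib, sum_div]
  exact sum_congr rfl fun x _ => by ring

theorem qBinomial_deformed_variance_general (q θ : ℝ) (hq0 : 0 < q) (hq1 : q < 1) (hθ : 0 < θ)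
    (n : ℕ) :
    ∑ x ∈ Finset.range (n + 1),
      (qDef q x - qNat q n * (θ / (1 + θ * q ^ ((n : ℤ) - 1)))) ^ 2 *
        (qBinom q n x * q ^ (x * (x - 1) / 2) * θ ^ x /
          ∏ j ∈ Finset.range n, (1 + θ * q ^ j)) =
      (1 - q) / q * qNat q n ^ 2 *
          (θ ^ 2 / ((1 + θ * q ^ ((n : ℤ) - 1)) ^ 2 * (1 + θ * q ^ ((n : ℤ) - 2)))) +
        qNat q n * (θ / ((1 + θ * q ^ ((n : ℤ) - 1)) * (1 + θ * q ^ ((n : ℤ) - 2)))) := by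
  cases n with
  | zero => simp [qDef_zero, qNat]
  | succ m =>
    have hexp₁ : q ^ (((m + 1 : ℕ) : ℤ) - 1) = q ^ m := by
      rw [Nat.cast_succ, add_sub_cancel_right, zpow_natCast]
    have hexp₂ : ((m + 1 : ℕ) : ℤ) - 2 = (m : ℤ) - 1 := by push_cast; ring
    have hvar := sum_sub_sq_mul_div (range (m + 2)) (qDef q) (qBinomWeight q θ (m + 1))
      (qNat q (m + 1) * (θ / (1 + θ * q ^ m))) (∏ j ∈ range (m + 1), (1 + θ * q ^ j))
    have hP : 0 < ∏ j ∈ range m, (1 + θ * q ^ j) := prod_pos fun j _ => by positivity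
    have hb : 0 < 1 + θ * q ^ ((m : ℤ) - 1) := by positivity
    rw [hexp₁, hexp₂]
    refine hvar.trans ?_
    rw [eq_div_of_mul_eq hb.ne' (sum_qDef_sq_mul_qBinomWeight θ hq0 hq1 m),
      eq_div_of_mul_eq (by positivity) (sum_qDef_mul_qBinomWeight θ hq0 hq1 (m + 1)),
      hexp₁, sum_qBinomWeight θ hq0.le hq1, prod_range_succ]
    have hqm : q ^ m = q * q ^ ((m : ℤ) - 1) := by
      rw [← zpow_one_add₀ hq0.ne', add_sub_cancel, zpow_natCast]
    have : 1 - q ≠ 0 := sub_ne_zero.2 hq1.ne'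
    rw [qNat, qNat, pow_succ, hqm]
    field_simp
    ring

/-- **Variance of the deformed q-binomial variable**:
`V([X]_{1/q}) = (1-q)/q · [n]_q² θ²/((1+θq^{n-1})²(1+θq^{n-2}))
  + [n]_q θ/((1+θq^{n-1})(1+θq^{n-2}))`. -/
theorem qBinomial_deformed_variance (q θ : ℝ) (hq0 : 0 < q) (hq1 : q < 1) (hθ : 0 < θ)
    (n : ℕ) (hn : 2 ≤ n) :
    ∑ x ∈ Finset.range (n + 1),
      (qDef q x - qNat q n * (θ / (1 + θ * q ^ ((n : ℤ) - 1)))) ^ 2 *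
        (qBinom q n x * q ^ (x * (x - 1) / 2) * θ ^ x /
          ∏ j ∈ Finset.range n, (1 + θ * q ^ j)) =
      (1 - q) / q * qNat q n ^ 2 *
          (θ ^ 2 / ((1 + θ * q ^ ((n : ℤ) - 1)) ^ 2 * (1 + θ * q ^ ((n : ℤ) - 2)))) +
        qNat q n * (θ / ((1 + θ * q ^ ((n : ℤ) - 1)) * (1 + θ * q ^ ((n : ℤ) - 2)))) :=
  qBinomial_deformed_variance_general q θ hq0 hq1 hθ n
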